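/- Let A, B ∈ M_n(ℂ) and define A₂(t) := exp(−itA/2) · ( (1/2)(exp(−itB) A exp(itB) − A) + exp(−itB)(exp(−itA/2) B exp(itA/2) − B) exp(itB) ) · exp(itA/2). Define Ω₂ := −(1/8)( ad_A²(B) − 2 ad_B²(A) ), Ω₃ := (i/12)( ad_A³(B) + (3/2) ad_B(ad_A²(B)) − 2 ad_B³(A) − (3/2) ad_A(ad_B²(A)) ), and Ω₄ := (1/16)( (11/24) ad_A⁴(B) − ad_B⁴(A) − (4/3) ad_A(ad_B³(A)) − (1/2) ad_A²(ad_B²(A)) + ad_B²(ad_A²(B)) + (1/3) ad_B(ad_A³(B)) + ad_A(ad_B(ad_A²(B))) ). There exists a constant C ≥ 0 such that for all t ∈ [0,1], ‖ A₂(t) − t²Ω₂ − t³Ω₃ − t⁴Ω₄ ‖ ≤ C t⁵. -/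

import Mathlib

open scoped Matrix.Norms.L2Operator
open Matrix

/-- `ad_X(Y) := [X,Y] = XY - YX`. -/
noncomputable def ad {n : ℕ} (X Y : Matrix (Fin n) (Fin n) ℂ) :
    Matrix (Fin n) (Fin n) ℂ :=
  X * Y - Y * X

/-- The exact error Hamiltonian of the second-order (Strang) splitting. -/
noncomputable def A2 {n : ℕ} (A B : Matrix (Fin n) (Fin n) ℂ) (t : ℝ) :
    Matrix (Fin n) (Fin n) ℂ :=
  NormedSpace.exp ((-(Complex.I * (t : ℂ) / 2)) • A) *
    ((1 / 2 : ℂ) •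
        (NormedSpace.exp ((-(Complex.I * (t : ℂ))) • B) * A *
            NormedSpace.exp ((Complex.I * (t : ℂ)) • B) - A) +
      NormedSpace.exp ((-(Complex.I * (t : ℂ))) • B) *
        (NormedSpace.exp ((-(Complex.I * (t : ℂ) / 2)) • A) * B *
            NormedSpace.exp ((Complex.I * (t : ℂ) / 2) • A) - B) *
        NormedSpace.exp ((Complex.I * (t : ℂ)) • B)) *
    NormedSpace.exp ((Complex.I * (t : ℂ) / 2) • A)


/-!
Each factor of `A₂(t)` is a constant matrix or an exponential `exp (t • X)`, so `A₂` has a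
truncated Taylor expansion (a jet) `∑_{k<5} t^k J_k` with remainder `O(t⁵)` uniformly on `[0, 1]`:
jets with such remainders are stable under sums and products, and the exponential series gives
the jet of `exp (t • X)`. By Hadamard's formula `e^{tX} Y e^{-tX} = ∑ t^k/k! ad_X^k Y`, conjugation
acts on coefficients through iterated commutators, so the coefficients of `A₂` are explicit nested
commutators of `A` and `B`; they agree with `Ω₂, Ω₃, Ω₄` once `⁅A, B⁆` is rewritten as `-⁅B, A⁆`.
-/

open Filter Asymptotics Finset Complex
open scoped Nat

attribute [local instance] LieRing.ofAssociativeRing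

section Jets

variable {E : Type*} [NormedAddCommGroup E] [NormedSpace ℂ E]

noncomputable def jetEval (N : ℕ) (J : ℕ → E) (t : ℝ) : E :=
  ∑ k ∈ range N, (t : ℂ) ^ k • J k

def HasJet (N : ℕ) (f : ℝ → E) (J : ℕ → E) : Prop :=
  (fun t => f t - jetEval N J t) =O[𝓟 (Set.Icc 0 1)] (· ^ N)

lemma isBigO_ofReal_pow_smul {N m : ℕ} (hm : N ≤ m) (c : E) :
    (fun t : ℝ => (t : ℂ) ^ m • c) =O[𝓟 (Set.Icc 0 1)] (· ^ N) := by
  refine isBigO_principal.2 ⟨‖c‖, fun t ht => ?_⟩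
  rw [norm_smul, norm_pow, Complex.norm_real, mul_comm, norm_pow]
  exact mul_le_mul_of_nonneg_left
    (pow_le_pow_of_le_one (norm_nonneg t) (by simpa [abs_of_nonneg ht.1] using ht.2) hm)
    (norm_nonneg c)

lemma isBigO_pow_one (N : ℕ) : (· ^ N) =O[𝓟 (Set.Icc (0 : ℝ) 1)] fun _ => (1 : ℝ) :=
  (continuousOn_pow N).isBigO_principal isCompact_Icc (by simp)

lemma isBigO_jetEval_one (N : ℕ) (J : ℕ → E) :
    jetEval N J =O[𝓟 (Set.Icc 0 1)] fun _ => (1 : ℝ) :=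
  ContinuousOn.isBigO_principal (by unfold jetEval; fun_prop) isCompact_Icc (by simp)

namespace HasJet

variable {N : ℕ} {f g : ℝ → E} {J J' : ℕ → E}

lemma isBigO_one (h : HasJet N f J) : f =O[𝓟 (Set.Icc 0 1)] fun _ => (1 : ℝ) := by
  simpa using (IsBigO.trans h (isBigO_pow_one N)).add (isBigO_jetEval_one N J)

lemma congr (h : HasJet N f J) (hfg : ∀ t, f t = g t) : HasJet N g J :=
  funext hfg ▸ h

lemma add (hf : HasJet N f J) (hg : HasJet N g J') : HasJet N (f + g) (J + J') := by
  refine (IsBigO.add hf hg).congr_left fun t => ?_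
  simp only [jetEval, Pi.add_apply, smul_add, sum_add_distrib]
  abel

lemma const_smul (hf : HasJet N f J) (c : ℂ) : HasJet N (c • f) (c • J) := by
  refine (IsBigO.const_smul_left hf c).congr_left fun t => ?_
  simp only [jetEval, Pi.smul_apply, smul_sub, smul_sum, smul_comm c]

lemma neg (hf : HasJet N f J) : HasJet N (-f) (-J) := by
  simpa using hf.const_smul (-1)

lemma sub (hf : HasJet N f J) (hg : HasJet N g J') : HasJet N (f - g) (J - J') := by
  simpa [sub_eq_add_neg] using hf.add hg.neg

lemma of_succ (h : HasJet (N + 1) f J) : HasJet N f J := by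
  have hpow : (fun t : ℝ => t ^ (N + 1)) =O[𝓟 (Set.Icc 0 1)] (· ^ N) := by
    simpa [pow_succ] using (isBigO_refl (· ^ N) _).mul (isBigO_pow_one 1)
  refine (IsBigO.add (IsBigO.trans h hpow) (isBigO_ofReal_pow_smul le_rfl (J N))).congr_left
    fun t => ?_
  simp only [jetEval, sum_range_succ]
  abel

end HasJet

lemma hasJet_const (N : ℕ) (c : E) : HasJet N (fun _ => c) (Pi.single 0 c) := by
  rcases N with _ | N
  · simpa [HasJet, jetEval] using isBigO_const_const c (one_ne_zero (α := ℝ)) (𝓟 (Set.Icc 0 1))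
  · refine (isBigO_zero _ _).congr_left fun t => ?_
    simp [jetEval, Pi.single_apply]

end Jets

noncomputable def jetMul {R : Type*} [Mul R] [AddCommMonoid R] (J J' : ℕ → R) (k : ℕ) : R :=
  ∑ p ∈ antidiagonal k, J p.1 * J' p.2

lemma jetMul_jetMul_apply {R : Type*} [NonUnitalSemiring R] (E J E' : ℕ → R) (k : ℕ) :
    jetMul (jetMul E J) E' k =
      ∑ p ∈ antidiagonal k, ∑ q ∈ antidiagonal p.1, E q.1 * J p.2 * E' q.2 := by
  simp only [jetMul, sum_mul]
  rw [sum_sigma', sum_sigma']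
  refine sum_nbij' (fun x => ⟨(x.2.1 + x.1.2, x.2.2), (x.2.1, x.1.2)⟩)
    (fun x => ⟨(x.2.1 + x.1.2, x.2.2), (x.2.1, x.1.2)⟩) ?_ ?_ ?_ ?_ ?_ <;>
    simp +contextual [HasAntidiagonal.mem_antidiagonal] <;> omega

section Algebra

variable {𝔸 : Type*} [NormedRing 𝔸] [NormedAlgebra ℂ 𝔸]

lemma jetEval_mul_jetEval (N : ℕ) (J J' : ℕ → 𝔸) (t : ℝ) :
    jetEval N J t * jetEval N J' t = jetEval N (jetMul J J') t +
      ∑ i ∈ range N, ∑ j ∈ Ico (N - i) N, (t : ℂ) ^ (i + j) • (J i * J' j) := by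
  have hlow : ∑ i ∈ range N, ∑ j ∈ range (N - i), (t : ℂ) ^ (i + j) • (J i * J' j) =
      jetEval N (jetMul J J') t := by
    rw [← sum_range_diag_flip]
    refine sum_congr rfl fun m _ => ?_
    rw [jetMul, Nat.sum_antidiagonal_eq_sum_range_succ (fun i j => J i * J' j), smul_sum]
    refine sum_congr rfl fun i hi => ?_
    rw [Nat.add_sub_cancel' (Nat.lt_succ_iff.mp (mem_range.mp hi))]
  rw [← hlow, ← sum_add_distrib, jetEval, jetEval, sum_mul_sum]
  refine sum_congr rfl fun i _ => ?_
  rw [sum_range_add_sum_Ico _ (Nat.sub_le N i)]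
  simp only [smul_mul_smul_comm, pow_add]

lemma HasJet.mul {N : ℕ} {f g : ℝ → 𝔸} {J J' : ℕ → 𝔸} (hf : HasJet N f J) (hg : HasJet N g J') :
    HasJet N (f * g) (jetMul J J') := by
  have h₁ : (fun t => (f t - jetEval N J t) * g t) =O[𝓟 (Set.Icc 0 1)] (· ^ N) := by
    simpa using IsBigO.mul hf hg.isBigO_one
  have h₂ : (fun t => jetEval N J t * (g t - jetEval N J' t)) =O[𝓟 (Set.Icc 0 1)] (· ^ N) := by
    simpa using IsBigO.mul (isBigO_jetEval_one N J) hg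
  have h₃ : (fun t : ℝ => ∑ i ∈ range N, ∑ j ∈ Ico (N - i) N, (t : ℂ) ^ (i + j) • (J i * J' j))
      =O[𝓟 (Set.Icc 0 1)] (· ^ N) :=
    IsBigO.fun_sum fun i _ => IsBigO.fun_sum fun j hj =>
      isBigO_ofReal_pow_smul (by have := (mem_Ico.mp hj).1; omega) _
  refine ((h₁.add h₂).add h₃).congr' (Eventually.of_forall fun t => ?_) (by rfl)
  simp only [Pi.mul_apply]
  rw [eq_sub_iff_add_eq.mpr (jetEval_mul_jetEval N J J' t).symm]
  noncomm_ring

noncomputable def expJet (M : 𝔸) (k : ℕ) : 𝔸 := (k ! : ℂ)⁻¹ • M ^ k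

lemma norm_exp_sub_sum_range_le [CompleteSpace 𝔸] {N : ℕ} (hN : N ≠ 0) (M : 𝔸) :
    ‖NormedSpace.exp M - ∑ k ∈ range N, expJet M k‖ ≤ ‖M‖ ^ N * Real.exp ‖M‖ := by
  have hf : HasSum (expJet M) (NormedSpace.exp M) := NormedSpace.exp_series_hasSum_exp' (𝕂 := ℂ) M
  have hnorm : Summable fun k => ‖expJet M (k + N)‖ :=
    (summable_nat_add_iff N).2 (NormedSpace.norm_expSeries_summable' (𝕂 := ℂ) M)
  have htail : NormedSpace.exp M - ∑ k ∈ range N, expJet M k = ∑' k, expJet M (k + N) := by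
    rw [← hf.tsum_eq, ← hf.summable.sum_add_tsum_nat_add N, add_sub_cancel_left]
  have hterm (k : ℕ) : ‖expJet M (k + N)‖ ≤ ‖M‖ ^ N * (‖M‖ ^ k / k !) := by
    calc ‖expJet M (k + N)‖ ≤ ((k + N)! : ℝ)⁻¹ * ‖M‖ ^ (k + N) := by
          simp only [expJet, norm_smul, norm_inv, Complex.norm_natCast]
          gcongr
          exact norm_pow_le' M (by omega)
      _ ≤ (k ! : ℝ)⁻¹ * ‖M‖ ^ (k + N) := by
          gcongr
          omega
      _ = ‖M‖ ^ N * (‖M‖ ^ k / k !) := by ring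
  calc ‖NormedSpace.exp M - ∑ k ∈ range N, expJet M k‖ ≤ ∑' k, ‖expJet M (k + N)‖ := by
        rw [htail]; exact norm_tsum_le_tsum_norm hnorm
    _ ≤ ∑' k : ℕ, ‖M‖ ^ N * (‖M‖ ^ k / k !) :=
        hnorm.tsum_le_tsum hterm ((Real.summable_pow_div_factorial ‖M‖).mul_left _)
    _ = ‖M‖ ^ N * Real.exp ‖M‖ := by
        rw [tsum_mul_left, Real.exp_eq_exp_ℝ, NormedSpace.exp_eq_tsum_div]

lemma hasJet_exp_of_ne_zero [CompleteSpace 𝔸] {N : ℕ} (hN : N ≠ 0) (M : 𝔸) :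
    HasJet N (fun t => NormedSpace.exp ((t : ℂ) • M)) (expJet M) := by
  refine isBigO_principal.2 ⟨‖M‖ ^ N * Real.exp ‖M‖, fun t ht => ?_⟩
  have hnorm : ‖(t : ℂ) • M‖ = t * ‖M‖ := by
    rw [norm_smul, Complex.norm_real, Real.norm_of_nonneg ht.1]
  have hev : jetEval N (expJet M) t = ∑ k ∈ range N, expJet ((t : ℂ) • M) k := by
    simp only [jetEval, expJet, smul_pow, smul_comm ((t : ℂ) ^ _)]
  calc ‖NormedSpace.exp ((t : ℂ) • M) - jetEval N (expJet M) t‖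
      ≤ (t * ‖M‖) ^ N * Real.exp (t * ‖M‖) := by
        rw [hev, ← hnorm]; exact norm_exp_sub_sum_range_le hN _
    _ ≤ (t * ‖M‖) ^ N * Real.exp ‖M‖ := by
        refine mul_le_mul_of_nonneg_left (Real.exp_le_exp.2 ?_)
          (pow_nonneg (mul_nonneg ht.1 (norm_nonneg M)) N)
        exact mul_le_of_le_one_left (norm_nonneg M) ht.2
    _ = ‖M‖ ^ N * Real.exp ‖M‖ * ‖t ^ N‖ := by
        rw [norm_pow, Real.norm_of_nonneg ht.1]; ring

-- The remainder bound needs `N ≠ 0`, as `‖M ^ 0‖ = ‖1‖` may exceed `1`;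
-- the case `N = 0` follows from `N = 1`.
lemma hasJet_exp [CompleteSpace 𝔸] (N : ℕ) (M : 𝔸) :
    HasJet N (fun t => NormedSpace.exp ((t : ℂ) • M)) (expJet M) := by
  rcases eq_or_ne N 0 with rfl | hN
  · exact (hasJet_exp_of_ne_zero one_ne_zero M).of_succ
  · exact hasJet_exp_of_ne_zero hN M

lemma sum_antidiagonal_expJet_mul_mul_expJet_neg (X Y : 𝔸) (m : ℕ) :
    ∑ p ∈ antidiagonal m, expJet X p.1 * Y * expJet (-X) p.2 =
      (m ! : ℂ)⁻¹ • (LieAlgebra.ad ℂ 𝔸 X ^ m) Y := by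
  have had : LieAlgebra.ad ℂ 𝔸 X = LinearMap.mulLeft ℂ X + LinearMap.mulRight ℂ (-X) := by
    ext Y; simp [Ring.lie_def, sub_eq_add_neg]
  rw [had, (LinearMap.commute_mulLeft_right X (-X)).add_pow', LinearMap.sum_apply, smul_sum]
  refine sum_congr rfl fun p hp => ?_
  obtain ⟨i, j⟩ := p
  rw [HasAntidiagonal.mem_antidiagonal] at hp
  subst hp
  have hfac : ((i + j)! : ℂ)⁻¹ * (i + j).choose i = (j ! : ℂ)⁻¹ * (i ! : ℂ)⁻¹ := by
    have h : ((i + j).choose i * i ! * j ! : ℂ) = (i + j)! := by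
      rw [Nat.choose_symm_add]; exact_mod_cast Nat.add_choose_mul_factorial_mul_factorial i j
    have hc : ((i + j).choose i : ℂ) ≠ 0 := by exact_mod_cast (Nat.choose_pos (by omega)).ne'
    rw [← h]
    field_simp
  simp only [expJet, LinearMap.smul_apply, Module.End.mul_apply, LinearMap.pow_mulLeft,
    LinearMap.pow_mulRight, LinearMap.mulLeft_apply, LinearMap.mulRight_apply, smul_mul_assoc,
    mul_smul_comm, smul_smul, ← Nat.cast_smul_eq_nsmul ℂ, mul_assoc, hfac]

noncomputable def conjJet (X : 𝔸) (J : ℕ → 𝔸) (k : ℕ) : 𝔸 :=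
  ∑ p ∈ antidiagonal k, (p.1 ! : ℂ)⁻¹ • (LieAlgebra.ad ℂ 𝔸 X ^ p.1) (J p.2)

lemma HasJet.conj [CompleteSpace 𝔸] {N : ℕ} {f : ℝ → 𝔸} {J : ℕ → 𝔸} (hf : HasJet N f J)
    (X : 𝔸) :
    HasJet N (fun t => NormedSpace.exp ((t : ℂ) • X) * f t * NormedSpace.exp ((t : ℂ) • -X))
      (conjJet X J) := by
  have hJ : jetMul (jetMul (expJet X) J) (expJet (-X)) = conjJet X J := funext fun k => by
    rw [jetMul_jetMul_apply, conjJet]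
    exact sum_congr rfl fun p _ => sum_antidiagonal_expJet_mul_mul_expJet_neg X (J p.2) p.1
  exact hJ ▸ ((hasJet_exp N X).mul hf).mul (hasJet_exp N (-X))

lemma conjJet_single (X Y : 𝔸) :
    conjJet X (Pi.single 0 Y) = fun k => (k ! : ℂ)⁻¹ • (LieAlgebra.ad ℂ 𝔸 X ^ k) Y := by
  funext k
  rw [conjJet, sum_eq_single (k, 0)]
  · simp
  · rintro ⟨i, j⟩ hp hne
    rw [HasAntidiagonal.mem_antidiagonal] at hp
    have : j ≠ 0 := by rintro rfl; simp_all
    simp [this]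
  · simp

noncomputable def strangErrorJet (A B : 𝔸) : ℕ → 𝔸 :=
  conjJet (-(I / 2) • A)
    ((1 / 2 : ℂ) • (conjJet (-I • B) (Pi.single 0 A) - Pi.single 0 A) +
      conjJet (-I • B) (conjJet (-(I / 2) • A) (Pi.single 0 B) - Pi.single 0 B))

lemma strangErrorJet_values (A B : 𝔸) :
    strangErrorJet A B 0 = 0 ∧ strangErrorJet A B 1 = 0 ∧
    strangErrorJet A B 2 = (-(1 / 8) : ℂ) • (⁅A, ⁅A, B⁆⁆ - 2 • ⁅B, ⁅B, A⁆⁆) ∧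
    strangErrorJet A B 3 = (I / 12) • (⁅A, ⁅A, ⁅A, B⁆⁆⁆ + (3 / 2 : ℂ) • ⁅B, ⁅A, ⁅A, B⁆⁆⁆ -
      2 • ⁅B, ⁅B, ⁅B, A⁆⁆⁆ - (3 / 2 : ℂ) • ⁅A, ⁅B, ⁅B, A⁆⁆⁆) ∧
    strangErrorJet A B 4 = (1 / 16 : ℂ) • ((11 / 24 : ℂ) • ⁅A, ⁅A, ⁅A, ⁅A, B⁆⁆⁆⁆ -
      ⁅B, ⁅B, ⁅B, ⁅B, A⁆⁆⁆⁆ - (4 / 3 : ℂ) • ⁅A, ⁅B, ⁅B, ⁅B, A⁆⁆⁆⁆ -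
      (1 / 2 : ℂ) • ⁅A, ⁅A, ⁅B, ⁅B, A⁆⁆⁆⁆ + ⁅B, ⁅B, ⁅A, ⁅A, B⁆⁆⁆⁆ +
      (1 / 3 : ℂ) • ⁅B, ⁅A, ⁅A, ⁅A, B⁆⁆⁆⁆ + ⁅A, ⁅B, ⁅A, ⁅A, B⁆⁆⁆⁆) := by
  simp only [strangErrorJet, conjJet_single]
  refine ⟨?_, ?_, ?_, ?_, ?_⟩ <;>
  simp only [conjJet, Nat.sum_antidiagonal_eq_sum_range_succ_mk, sum_range_succ, sum_range_zero,
    Pi.add_apply, Pi.sub_apply, Pi.smul_apply, Pi.single_apply, Nat.reduceSub, reduceIte,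
    OfNat.ofNat_ne_zero, one_ne_zero, map_smul, smul_pow, LinearMap.smul_apply, pow_succ, pow_zero,
    Module.End.mul_apply, Module.End.one_apply, LieAlgebra.ad_apply, lie_add, lie_sub, lie_smul,
    lie_neg, lie_self, lie_zero, map_zero, smul_zero, sub_zero, ← lie_skew A B] <;>
  match_scalars <;> simp [Complex.ext_iff] <;> norm_num

end Algebra

lemma hasJet_A2 {n : ℕ} (A B : Matrix (Fin n) (Fin n) ℂ) (N : ℕ) :
    HasJet N (A2 A B) (strangErrorJet A B) := by
  have hA := hasJet_const N A
  have hB := hasJet_const N B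
  have h := ((((hA.conj (-I • B)).sub hA).const_smul (1 / 2)).add
    (((hB.conj (-(I / 2) • A)).sub hB).conj (-I • B))).conj (-(I / 2) • A)
  refine h.congr fun t => ?_
  simp only [A2, Pi.add_apply, Pi.sub_apply, Pi.smul_apply, smul_smul, ← neg_smul]
  ring_nf

lemma ad_eq_lie {n : ℕ} (X Y : Matrix (Fin n) (Fin n) ℂ) : ad X Y = ⁅X, Y⁆ :=
  (Ring.lie_def X Y).symm

/-- the expansion `A₂(t) = t²Ω₂ + t³Ω₃ + t⁴Ω₄ + O(t⁵)`. -/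
theorem stmt16 {n : ℕ} (A B : Matrix (Fin n) (Fin n) ℂ)
    (Ω₂ Ω₃ Ω₄ : Matrix (Fin n) (Fin n) ℂ)
    (hΩ₂ : Ω₂ = (-(1 / 8) : ℂ) • ((ad A)^[2] B - 2 • (ad B)^[2] A))
    (hΩ₃ : Ω₃ = (Complex.I / 12) •
      ((ad A)^[3] B + (3 / 2 : ℂ) • ad B ((ad A)^[2] B) - 2 • (ad B)^[3] A -
        (3 / 2 : ℂ) • ad A ((ad B)^[2] A)))
    (hΩ₄ : Ω₄ = (1 / 16 : ℂ) •
      ((11 / 24 : ℂ) • (ad A)^[4] B - (ad B)^[4] A -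
        (4 / 3 : ℂ) • ad A ((ad B)^[3] A) -
        (1 / 2 : ℂ) • (ad A)^[2] ((ad B)^[2] A) +
        (ad B)^[2] ((ad A)^[2] B) +
        (1 / 3 : ℂ) • ad B ((ad A)^[3] B) +
        ad A (ad B ((ad A)^[2] B)))) :
    ∃ C : ℝ, 0 ≤ C ∧ ∀ t ∈ Set.Icc (0:ℝ) 1,
      ‖A2 A B t - (t : ℂ) ^ 2 • Ω₂ - (t : ℂ) ^ 3 • Ω₃ - (t : ℂ) ^ 4 • Ω₄‖
        ≤ C * t ^ 5 := by
  obtain ⟨C, hC, hbound⟩ := (hasJet_A2 A B 5).exists_nonneg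
  obtain ⟨h₀, h₁, h₂, h₃, h₄⟩ := strangErrorJet_values A B
  simp only [Function.iterate_succ_apply', Function.iterate_zero_apply, ad_eq_lie] at hΩ₂ hΩ₃ hΩ₄
  refine ⟨C, hC, fun t ht => ?_⟩
  have hjet : jetEval 5 (strangErrorJet A B) t =
      (t : ℂ) ^ 2 • Ω₂ + (t : ℂ) ^ 3 • Ω₃ + (t : ℂ) ^ 4 • Ω₄ := by
    simp only [jetEval, sum_range_succ, sum_range_zero, h₀, h₁, h₂, h₃, h₄, ← hΩ₂, ← hΩ₃, ← hΩ₄,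
      smul_zero, zero_add]
  have h := isBigOWith_principal.1 hbound t ht
  rwa [hjet, Real.norm_of_nonneg (pow_nonneg ht.1 5), ← sub_sub, ← sub_sub] at h
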